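/- arXiv:2003.08900 — 2 statements merged into one kernel-verified Lean document; each statement's English description precedes it below -/
import Mathlib

section
/- Let N > M ≥ 1 be coprime integers with N + M odd, let a, b ∈ ℂ, and let τ : ℤ → ℂ satisfy τ_m ≠ 0 for all m. Define u_m = (τ_m τ_{m+M+1})/(τ_{m+1} τ_{m+M}). Then τ satisfies the bilinear T-system τ_{m+2M+N} τ_m = a τ_{m+2M} τ_{m+N} + b τ_{m+N+M} τ_{m+M} for all m ∈ ℤ if and only if u satisfies the U-system u_m u_{m+1} ⋯ u_{m+N+M−1} = (b u_{m+M} u_{m+M+1} ⋯ u_{m+N−1} + a)/(u_{m+M} u_{m+M+1} ⋯ u_{m+N−1}) for all m ∈ ℤ. -/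
/-!
Writing `g m = τ m / τ (m + M)`, we have `u m = g m / g (m + 1)`, so every product of consecutive
`u`'s telescopes to a cross-ratio of four values of `τ`. Substituting these cross-ratios, the
U-system at `m` becomes the T-system at `m` divided by `τ (m + M) τ (m + N + M)`.
-/

open Finset

section

variable {K : Type*} [Field K]

theorem prod_range_cross_ratio {τ u : ℤ → K} {M : ℤ} (hτ : ∀ m, τ m ≠ 0)
    (hu : ∀ m, u m = τ m * τ (m + M + 1) / (τ (m + 1) * τ (m + M)))
    (m n : ℤ) (k : ℕ) (hn : m + k = n) :
    ∏ i ∈ range k, u (m + i) = τ m * τ (n + M) / (τ n * τ (m + M)) := by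
  subst hn
  induction k with
  | zero => simp [div_self, mul_ne_zero (hτ m) (hτ (m + M))]
  | succ k ih =>
    rw [prod_range_succ, ih, hu]
    push_cast
    field_simp [hτ]
    ring_nf

theorem mul_eq_add_iff_div_eq_add_div {a b x₀ x₁ x₂ x₃ x₄ x₅ : K}
    (h₁ : x₁ ≠ 0) (h₂ : x₂ ≠ 0) (h₃ : x₃ ≠ 0) (h₄ : x₄ ≠ 0) :
    x₅ * x₀ = a * (x₃ * x₂) + b * (x₄ * x₁) ↔
      x₀ * x₅ / (x₄ * x₁) = (b * (x₁ * x₄ / (x₂ * x₃)) + a) / (x₁ * x₄ / (x₂ * x₃)) := by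
  field_simp
  constructor <;> intro h <;> linear_combination h

end

theorem tSystem_iff_uSystem_odd_second_general
    (N M : ℕ) (hMN : M < N) (a b : ℂ)
    (τ : ℤ → ℂ) (hτ : ∀ m : ℤ, τ m ≠ 0)
    (u : ℤ → ℂ)
    (hu : ∀ m : ℤ, u m = τ m * τ (m + M + 1) / (τ (m + 1) * τ (m + M))) :
    (∀ m : ℤ, τ (m + 2 * M + N) * τ m =
        a * (τ (m + 2 * M) * τ (m + N)) + b * (τ (m + N + M) * τ (m + M))) ↔
    (∀ m : ℤ, ∏ i ∈ Finset.range (N + M), u (m + i) =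
        (b * ∏ i ∈ Finset.range (N - M), u (m + M + i) + a) /
          ∏ i ∈ Finset.range (N - M), u (m + M + i)) := by
  refine forall_congr' fun m => ?_
  rw [prod_range_cross_ratio hτ hu m (m + N + M) (N + M) (by push_cast; ring),
    prod_range_cross_ratio hτ hu (m + M) (m + N) (N - M) (by omega),
    show m + N + M + M = m + 2 * M + N by ring, show m + M + M = m + 2 * M by ring]
  exact mul_eq_add_iff_div_eq_add_div (hτ _) (hτ _) (hτ _) (hτ _)

/-- For coprime `N > M ≥ 1` with `N + M` odd, a nowhere-vanishing
sequence `τ : ℤ → ℂ` satisfies the bilinear T-system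
`τ_{m+2M+N} τ_m = a τ_{m+2M} τ_{m+N} + b τ_{m+N+M} τ_{m+M}`
iff `u_m = (τ_m τ_{m+M+1})/(τ_{m+1} τ_{m+M})` satisfies the U-system
`u_m ⋯ u_{m+N+M−1} = (b u_{m+M} ⋯ u_{m+N−1} + a)/(u_{m+M} ⋯ u_{m+N−1})`. -/
theorem tSystem_iff_uSystem_odd_second
    (N M : ℕ) (hM : 1 ≤ M) (hMN : M < N) (hcop : Nat.Coprime N M)
    (hodd : Odd (N + M)) (a b : ℂ)
    (τ : ℤ → ℂ) (hτ : ∀ m : ℤ, τ m ≠ 0)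
    (u : ℤ → ℂ)
    (hu : ∀ m : ℤ, u m = τ m * τ (m + M + 1) / (τ (m + 1) * τ (m + M))) :
    (∀ m : ℤ, τ (m + 2 * M + N) * τ m =
        a * (τ (m + 2 * M) * τ (m + N)) + b * (τ (m + N + M) * τ (m + M))) ↔
    (∀ m : ℤ, ∏ i ∈ Finset.range (N + M), u (m + i) =
        (b * ∏ i ∈ Finset.range (N - M), u (m + M + i) + a) /
          ∏ i ∈ Finset.range (N - M), u (m + M + i)) :=
  tSystem_iff_uSystem_odd_second_general N M hMN a b τ hτ u hu
end

section
/- Let N > M ≥ 1 be coprime integers, α ∈ ℂ, let τ : ℤ → ℂ satisfy τ_m ≠ 0 for all m, and let β' : ℤ → ℂ satisfy β'_{m+N} = β'_m for all m. If τ satisfies the bilinear equation τ_{m+2M+N} τ_m = β'_m τ_{m+N+M} τ_{m+M} + α τ_{m+2M} τ_{m+N} for all m ∈ ℤ, then the sequence v_m := (τ_m τ_{m+N+M})/(τ_{m+M} τ_{m+N}) satisfies the (N,M) travelling-wave reduction of the lattice KdV equation, v_{m+N+M} − v_m = α(1/v_{m+N} − 1/v_{m+M}), for all m ∈ ℤ.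 -/
/-!
Put `B_m := (τ_{m+2M+N} τ_m - α τ_{m+2M} τ_{m+N}) / (τ_{m+N+M} τ_{m+M})`, so that the bilinear
equation says exactly `B_m = β'_m`; in particular `B` is `N`-periodic. A direct computation gives
the two factorisations
`v_m - α / v_{m+M} = g_m B_m` and `v_{m+N+M} - α / v_{m+N} = g_m B_{m+N}`
with the same gauge factor `g_m = τ_{m+N+M}² / (τ_{m+N} τ_{m+2M+N})`, and the lattice KdV
reduction is the difference of the two.
-/

namespace LatticeKdV

variable {K : Type*} [Field K]

def tauRatio (τ : ℤ → K) (a b m : ℤ) : K :=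
  τ m * τ (m + b + a) / (τ (m + a) * τ (m + b))

def bilinearCoeff (α : K) (τ : ℤ → K) (a b m : ℤ) : K :=
  (τ (m + 2 * a + b) * τ m - α * (τ (m + 2 * a) * τ (m + b))) / (τ (m + b + a) * τ (m + a))

variable {τ : ℤ → K}

theorem tauRatio_add_self (a b m : ℤ) :
    tauRatio τ a b (m + a) = τ (m + a) * τ (m + 2 * a + b) / (τ (m + 2 * a) * τ (m + b + a)) := by
  rw [tauRatio, show m + a + b + a = m + 2 * a + b by ring, show m + a + a = m + 2 * a by ring,
    show m + a + b = m + b + a by ring]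

theorem bilinearCoeff_eq_of_bilinear {α β : K} {a b m : ℤ} (hτ : ∀ n, τ n ≠ 0)
    (h : τ (m + 2 * a + b) * τ m = β * (τ (m + b + a) * τ (m + a)) +
      α * (τ (m + 2 * a) * τ (m + b))) :
    bilinearCoeff α τ a b m = β := by
  rw [bilinearCoeff, div_eq_iff (mul_ne_zero (hτ _) (hτ _))]
  linear_combination h

theorem tauRatio_sub_div_tauRatio_add (hτ : ∀ n, τ n ≠ 0) (α : K) (a b m : ℤ) :
    tauRatio τ a b m - α / tauRatio τ a b (m + a) =
      τ (m + b + a) ^ 2 / (τ (m + b) * τ (m + 2 * a + b)) * bilinearCoeff α τ a b m := by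
  rw [tauRatio_add_self]
  simp only [tauRatio, bilinearCoeff]
  field_simp [hτ]

theorem tauRatio_add_sub_div_tauRatio (hτ : ∀ n, τ n ≠ 0) (α : K) (a b m : ℤ) :
    tauRatio τ a b (m + a) - α / tauRatio τ a b m =
      τ (m + a) ^ 2 / (τ m * τ (m + 2 * a)) * bilinearCoeff α τ a b m := by
  rw [tauRatio_add_self]
  simp only [tauRatio, bilinearCoeff]
  field_simp [hτ]

theorem tauRatio_kdv_of_bilinearCoeff_add (hτ : ∀ n, τ n ≠ 0) {α : K} {a b m : ℤ}
    (hB : bilinearCoeff α τ a b (m + b) = bilinearCoeff α τ a b m) :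
    tauRatio τ a b (m + b + a) - tauRatio τ a b m =
      α * (1 / tauRatio τ a b (m + b) - 1 / tauRatio τ a b (m + a)) := by
  have hshift := tauRatio_add_sub_div_tauRatio hτ α a b (m + b)
  have hbase := tauRatio_sub_div_tauRatio_add hτ α a b m
  rw [hB, show m + b + 2 * a = m + 2 * a + b by ring] at hshift
  linear_combination hshift - hbase

end LatticeKdV

theorem bilinear_second_implies_kdvReduction_general
    (N M : ℕ) (α : ℂ)
    (τ : ℤ → ℂ) (hτ : ∀ m : ℤ, τ m ≠ 0)
    (β' : ℤ → ℂ) (hβ' : ∀ m : ℤ, β' (m + N) = β' m)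
    (hbil : ∀ m : ℤ, τ (m + 2 * M + N) * τ m =
        β' m * (τ (m + N + M) * τ (m + M)) + α * (τ (m + 2 * M) * τ (m + N)))
    (v : ℤ → ℂ)
    (hv : ∀ m : ℤ, v m = τ m * τ (m + N + M) / (τ (m + M) * τ (m + N))) :
    ∀ m : ℤ, v (m + N + M) - v m = α * (1 / v (m + N) - 1 / v (m + M)) := by
  obtain rfl : v = LatticeKdV.tauRatio τ M N := funext hv
  have hB : ∀ m, LatticeKdV.bilinearCoeff α τ M N m = β' m :=
    fun m => LatticeKdV.bilinearCoeff_eq_of_bilinear hτ (hbil m)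
  exact fun m => LatticeKdV.tauRatio_kdv_of_bilinearCoeff_add hτ (by rw [hB, hB, hβ'])

/-- If a nowhere-vanishing `τ : ℤ → ℂ` satisfies the bilinear equation
`τ_{m+2M+N} τ_m = β'_m τ_{m+N+M} τ_{m+M} + α τ_{m+2M} τ_{m+N}` with `β'` periodic of period `N`,
then `v_m = (τ_m τ_{m+N+M})/(τ_{m+M} τ_{m+N})` satisfies the `(N,M)` travelling-wave
reduction of the lattice KdV equation. -/
theorem bilinear_second_implies_kdvReduction
    (N M : ℕ) (hM : 1 ≤ M) (hMN : M < N) (hcop : Nat.Coprime N M) (α : ℂ)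
    (τ : ℤ → ℂ) (hτ : ∀ m : ℤ, τ m ≠ 0)
    (β' : ℤ → ℂ) (hβ' : ∀ m : ℤ, β' (m + N) = β' m)
    (hbil : ∀ m : ℤ, τ (m + 2 * M + N) * τ m =
        β' m * (τ (m + N + M) * τ (m + M)) + α * (τ (m + 2 * M) * τ (m + N)))
    (v : ℤ → ℂ)
    (hv : ∀ m : ℤ, v m = τ m * τ (m + N + M) / (τ (m + M) * τ (m + N))) :
    ∀ m : ℤ, v (m + N + M) - v m = α * (1 / v (m + N) - 1 / v (m + M)) :=
  bilinear_second_implies_kdvReduction_general N M α τ hτ β' hβ' hbil v hv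
end
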